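/- Let p and q be odd integers with p, q ≥ 5. In Coxeter's group G^{5,p,q}, the identity C = (A^2B^2)^2 holds. -/
import Mathlib


/-- The relators of Coxeter's group `G^{m,p,q}` on generators
`A = of 0`, `B = of 1`, `C = of 2`. -/
def coxeterGRels (m p q : ℤ) : Set (FreeGroup (Fin 3)) :=
  let A : FreeGroup (Fin 3) := FreeGroup.of 0
  let B : FreeGroup (Fin 3) := FreeGroup.of 1
  let C : FreeGroup (Fin 3) := FreeGroup.of 2
  { A ^ p, B ^ q, C ^ m, (A * B) ^ 2, (B * C) ^ 2, (C * A) ^ 2, (A * B * C) ^ 2 }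

theorem coxeter_rel_one {m p q : ℤ} (r : FreeGroup (Fin 3))
    (hr : r ∈ coxeterGRels m p q) :
    PresentedGroup.mk (coxeterGRels m p q) r = 1 :=
  (QuotientGroup.eq_one_iff r).mpr (Subgroup.subset_normalClosure hr)

/-- In Coxeter's group `G^{5,p,q}` with `p,q` odd and `p,q ≥ 5`, the identity
`C = (A²B²)²` holds. -/
theorem C_eq_A2B2_sq (p q : ℤ) (hp : Odd p) (hq : Odd q)
    (hp5 : 5 ≤ p) (hq5 : 5 ≤ q) :
    (PresentedGroup.of 2 : PresentedGroup (coxeterGRels 5 p q)) =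
      ((PresentedGroup.of 0 : PresentedGroup (coxeterGRels 5 p q)) ^ 2 *
        (PresentedGroup.of 1 : PresentedGroup (coxeterGRels 5 p q)) ^ 2) ^ 2 := by
  set a : PresentedGroup (coxeterGRels 5 p q) := PresentedGroup.of 0 with ha
  set b : PresentedGroup (coxeterGRels 5 p q) := PresentedGroup.of 1 with hb
  set c : PresentedGroup (coxeterGRels 5 p q) := PresentedGroup.of 2 with hc
  clear_value a b c
  -- extract the relations
  have h1 : (a * b) ^ 2 = 1 := by
    have := coxeter_rel_one (m := 5) (p := p) (q := q)
      ((FreeGroup.of 0 * FreeGroup.of 1) ^ 2) (by simp [coxeterGRels])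
    simpa [map_pow, map_mul, ha, hb, PresentedGroup.of] using this
  have h2 : (b * c) ^ 2 = 1 := by
    have := coxeter_rel_one (m := 5) (p := p) (q := q)
      ((FreeGroup.of 1 * FreeGroup.of 2) ^ 2) (by simp [coxeterGRels])
    simpa [map_pow, map_mul, hb, hc, PresentedGroup.of] using this
  have h3 : (c * a) ^ 2 = 1 := by
    have := coxeter_rel_one (m := 5) (p := p) (q := q)
      ((FreeGroup.of 2 * FreeGroup.of 0) ^ 2) (by simp [coxeterGRels])
    simpa [map_pow, map_mul, ha, hc, PresentedGroup.of] using this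
  have h4 : (a * b * c) ^ 2 = 1 := by
    have := coxeter_rel_one (m := 5) (p := p) (q := q)
      ((FreeGroup.of 0 * FreeGroup.of 1 * FreeGroup.of 2) ^ 2) (by simp [coxeterGRels])
    simpa [map_pow, map_mul, ha, hb, hc, PresentedGroup.of] using this
  have h5 : c ^ (5 : ℤ) = 1 := by
    have := coxeter_rel_one (m := 5) (p := p) (q := q)
      ((FreeGroup.of 2) ^ (5 : ℤ)) (by simp [coxeterGRels])
    simpa [map_zpow, hc, PresentedGroup.of] using this
  have h5' : c ^ (5 : ℕ) = 1 := by
    have : ((5 : ℤ) : ℤ) = ((5 : ℕ) : ℤ) := by norm_num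
    rw [← zpow_natCast]; exact_mod_cast h5
  -- involutions
  have e1 : a * b = (a * b)⁻¹ := by
    rw [eq_inv_iff_mul_eq_one, ← sq]; exact h1
  have e2 : b * c = (b * c)⁻¹ := by
    rw [eq_inv_iff_mul_eq_one, ← sq]; exact h2
  have e3 : c * a = (c * a)⁻¹ := by
    rw [eq_inv_iff_mul_eq_one, ← sq]; exact h3
  -- key : c * a² * b² * c = 1
  have big : c * (a ^ 2 * b ^ 2) * c = 1 := by
    have step : c * (a ^ 2 * b ^ 2) * c = (c * a) * (a * b) * (b * c) := by
      simp [sq, mul_assoc]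
    rw [step, e3, e1, e2]
    have step2 : (c * a)⁻¹ * (a * b)⁻¹ * (b * c)⁻¹
        = a⁻¹ * ((a * b * c) ^ 2)⁻¹ * a := by
      simp [sq, mul_assoc]
    rw [step2, h4]; simp
  have key : a ^ 2 * b ^ 2 = c⁻¹ * c⁻¹ := by
    have : a ^ 2 * b ^ 2 = c⁻¹ * (c * (a ^ 2 * b ^ 2) * c) * c⁻¹ := by
      simp [sq, mul_assoc]
    rw [this, big]; simp [mul_assoc]
  rw [key]
  have : (c⁻¹ * c⁻¹) ^ 2 = c * (c ^ (5 : ℕ))⁻¹ := by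
    simp [sq, pow_succ, mul_assoc]
  rw [this, h5']; simp
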